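/- Let M ∈ ℝ^{m×n} be a rank-r matrix, let δ > 0, δ₀ = δ/6, let Ω ⊆ [m]×[n] be nonempty with p = |Ω|/(mn), and set ρ = 8·p·δ₀² in the definition of G and F̃. Assume Ω satisfies the RSC property at level δ: (1/3)·p·‖M − XYᵀ‖_F² ≤ ‖P_Ω(M − XYᵀ)‖_F² ≤ 2·p·‖M − XYᵀ‖_F² for all (X,Y) ∈ K₁ ∩ K₂ ∩ K(δ). Suppose (X₀, Y₀) ∈ (√(2/3)·K₁) ∩ (√(2/3)·K₂) ∩ K(δ₀). Then for every pair (X,Y) with F̃(X,Y) ≤ 2·F̃(X₀, Y₀), the value ‖M − X·Yᵀ‖_F does not lie in the interval [2δ/3, δ]. -/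
import Mathlib


open Matrix
open scoped Classical

noncomputable section

/-- Frobenius norm of a real matrix. -/
def frob {m n : ℕ} (A : Matrix (Fin m) (Fin n) ℝ) : ℝ :=
  Real.sqrt (∑ i, ∑ j, A i j ^ 2)

/-- Euclidean norm of the `i`-th row of a matrix. -/
def rowNorm {m n : ℕ} (A : Matrix (Fin m) (Fin n) ℝ) (i : Fin m) : ℝ :=
  Real.sqrt (∑ j, A i j ^ 2)

/-- Frobenius inner product `⟨A,B⟩ = trace(AᵀB)`. -/
def finner {m n : ℕ} (A B : Matrix (Fin m) (Fin n) ℝ) : ℝ :=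
  ∑ i, ∑ j, A i j * B i j

/-- Projection onto the set of entries indexed by `Ω` (other entries are set to `0`). -/
def projOmega {m n : ℕ} (Ω : Finset (Fin m × Fin n)) (A : Matrix (Fin m) (Fin n) ℝ) :
    Matrix (Fin m) (Fin n) ℝ :=
  Matrix.of fun i j => if (i, j) ∈ Ω then A i j else 0

/-- `G₀(z) = (max{0, z-1})²`. -/
def G0 (z : ℝ) : ℝ := max 0 (z - 1) ^ 2

/-- `G₀′(z) = 2·max{0, z-1}`. -/
def G0' (z : ℝ) : ℝ := 2 * max 0 (z - 1)

/-- The matrix whose `i`-th row is the `i`-th row of `A` and whose other rows vanish. -/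
def rowMat {m n : ℕ} (A : Matrix (Fin m) (Fin n) ℝ) (i : Fin m) :
    Matrix (Fin m) (Fin n) ℝ :=
  Matrix.of fun i' j => if i' = i then A i j else 0

/-- The regularizer `G(X,Y)`. -/
def Greg {m n r : ℕ} (ρ β1 β2 βT : ℝ) (X : Matrix (Fin m) (Fin r) ℝ)
    (Y : Matrix (Fin n) (Fin r) ℝ) : ℝ :=
  ρ * ∑ i, G0 (3 * rowNorm X i ^ 2 / (2 * β1 ^ 2)) +
    ρ * ∑ j, G0 (3 * rowNorm Y j ^ 2 / (2 * β2 ^ 2)) +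
    ρ * G0 (3 * frob X ^ 2 / (2 * βT ^ 2)) +
    ρ * G0 (3 * frob Y ^ 2 / (2 * βT ^ 2))

/-- The regularized objective `F̃(X,Y)`. -/
def Ftilde {m n r : ℕ} (Ω : Finset (Fin m × Fin n)) (M : Matrix (Fin m) (Fin n) ℝ)
    (ρ β1 β2 βT : ℝ) (X : Matrix (Fin m) (Fin r) ℝ) (Y : Matrix (Fin n) (Fin r) ℝ) : ℝ :=
  (1 / 2) * frob (projOmega Ω (M - X * Yᵀ)) ^ 2 + Greg ρ β1 β2 βT X Y

/-- Gradient of the regularizer with respect to one of the factors. -/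
def gradG1 {m r : ℕ} (ρ β βT : ℝ) (X : Matrix (Fin m) (Fin r) ℝ) :
    Matrix (Fin m) (Fin r) ℝ :=
  (∑ i, (ρ * G0' (3 * rowNorm X i ^ 2 / (2 * β ^ 2)) * (3 / β ^ 2)) • rowMat X i) +
    (ρ * G0' (3 * frob X ^ 2 / (2 * βT ^ 2)) * (3 / βT ^ 2)) • X

/-- `∇_X F̃(X,Y)`. -/
def gradX {m n r : ℕ} (Ω : Finset (Fin m × Fin n)) (M : Matrix (Fin m) (Fin n) ℝ)
    (ρ β1 βT : ℝ) (X : Matrix (Fin m) (Fin r) ℝ) (Y : Matrix (Fin n) (Fin r) ℝ) :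
    Matrix (Fin m) (Fin r) ℝ :=
  projOmega Ω (X * Yᵀ - M) * Y + gradG1 ρ β1 βT X

/-- `∇_Y F̃(X,Y)`. -/
def gradY {m n r : ℕ} (Ω : Finset (Fin m × Fin n)) (M : Matrix (Fin m) (Fin n) ℝ)
    (ρ β2 βT : ℝ) (X : Matrix (Fin m) (Fin r) ℝ) (Y : Matrix (Fin n) (Fin r) ℝ) :
    Matrix (Fin n) (Fin r) ℝ :=
  (projOmega Ω (X * Yᵀ - M))ᵀ * X + gradG1 ρ β2 βT Y

/-- Membership in `K₁`. -/
def K1mem {m n r : ℕ} (β1 β2 : ℝ) (X : Matrix (Fin m) (Fin r) ℝ)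
    (Y : Matrix (Fin n) (Fin r) ℝ) : Prop :=
  (∀ i, rowNorm X i ≤ β1) ∧ ∀ j, rowNorm Y j ≤ β2

/-- Membership in `K₂`. -/
def K2mem {m n r : ℕ} (βT : ℝ) (X : Matrix (Fin m) (Fin r) ℝ)
    (Y : Matrix (Fin n) (Fin r) ℝ) : Prop :=
  frob X ≤ βT ∧ frob Y ≤ βT

/-- Membership in `K(t) = {(X,Y) : ‖M - XYᵀ‖_F ≤ t}`. -/
def Kmem {m n r : ℕ} (M : Matrix (Fin m) (Fin n) ℝ) (t : ℝ)
    (X : Matrix (Fin m) (Fin r) ℝ) (Y : Matrix (Fin n) (Fin r) ℝ) : Prop :=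
  frob (M - X * Yᵀ) ≤ t


lemma G0_nonneg (z : ℝ) : 0 ≤ G0 z := by
  unfold G0; positivity

lemma G0_eq_zero {z : ℝ} (h : z ≤ 1) : G0 z = 0 := by
  unfold G0
  rw [max_eq_left (by linarith)]
  ring

lemma G0_gt_quarter {z : ℝ} (h : 3 / 2 < z) : 1 / 4 < G0 z := by
  unfold G0
  rw [max_eq_right (by linarith)]
  nlinarith

lemma frob_nonneg {m n : ℕ} (A : Matrix (Fin m) (Fin n) ℝ) : 0 ≤ frob A :=
  Real.sqrt_nonneg _

lemma rowNorm_nonneg {m n : ℕ} (A : Matrix (Fin m) (Fin n) ℝ) (i : Fin m) :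
    0 ≤ rowNorm A i := Real.sqrt_nonneg _

lemma Greg_nonneg {m n r : ℕ} (ρ β1 β2 βT : ℝ) (hρ : 0 ≤ ρ)
    (X : Matrix (Fin m) (Fin r) ℝ) (Y : Matrix (Fin n) (Fin r) ℝ) :
    0 ≤ Greg ρ β1 β2 βT X Y := by
  unfold Greg
  have h1 : 0 ≤ ∑ i, G0 (3 * rowNorm X i ^ 2 / (2 * β1 ^ 2)) :=
    Finset.sum_nonneg fun i _ => G0_nonneg _
  have h2 : 0 ≤ ∑ j, G0 (3 * rowNorm Y j ^ 2 / (2 * β2 ^ 2)) :=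
    Finset.sum_nonneg fun j _ => G0_nonneg _
  have h3 := G0_nonneg (3 * frob X ^ 2 / (2 * βT ^ 2))
  have h4 := G0_nonneg (3 * frob Y ^ 2 / (2 * βT ^ 2))
  have := mul_nonneg hρ h1
  have := mul_nonneg hρ h2
  have := mul_nonneg hρ h3
  have := mul_nonneg hρ h4
  linarith

set_option maxHeartbeats 1000000 in
/-- **Lemma: no point with small objective value lies in the annulus
`‖M - XYᵀ‖_F ∈ [2δ/3, δ]`.** -/
theorem stmt14 (m n r : ℕ) (hm : 1 ≤ m) (hn : 1 ≤ n) (hr : 1 ≤ r)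
    (M : Matrix (Fin m) (Fin n) ℝ) (hrank : M.rank = r)
    (δ δ0 : ℝ) (hδ : 0 < δ) (hδ0 : δ0 = δ / 6)
    (Ω : Finset (Fin m × Fin n)) (hΩ : Ω.Nonempty)
    (p : ℝ) (hp : p = (Ω.card : ℝ) / (m * n))
    (βT β1 β2 : ℝ) (hβT : 0 < βT) (hβ1 : 0 < β1) (hβ2 : 0 < β2)
    (ρ : ℝ) (hρ : ρ = 8 * p * δ0 ^ 2)
    (hRSC : ∀ (X : Matrix (Fin m) (Fin r) ℝ) (Y : Matrix (Fin n) (Fin r) ℝ),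
      K1mem β1 β2 X Y → K2mem βT X Y → Kmem M δ X Y →
      1 / 3 * p * frob (M - X * Yᵀ) ^ 2 ≤ frob (projOmega Ω (M - X * Yᵀ)) ^ 2 ∧
        frob (projOmega Ω (M - X * Yᵀ)) ^ 2 ≤ 2 * p * frob (M - X * Yᵀ) ^ 2)
    (X0 : Matrix (Fin m) (Fin r) ℝ) (Y0 : Matrix (Fin n) (Fin r) ℝ)
    (h0K1 : K1mem (Real.sqrt (2 / 3) * β1) (Real.sqrt (2 / 3) * β2) X0 Y0)
    (h0K2 : K2mem (Real.sqrt (2 / 3) * βT) X0 Y0)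
    (h0K : Kmem M δ0 X0 Y0)
    (X : Matrix (Fin m) (Fin r) ℝ) (Y : Matrix (Fin n) (Fin r) ℝ)
    (hF : Ftilde Ω M ρ β1 β2 βT X Y ≤ 2 * Ftilde Ω M ρ β1 β2 βT X0 Y0) :
    frob (M - X * Yᵀ) ∉ Set.Icc (2 * δ / 3) δ := by
  intro hmem
  obtain ⟨hlo, hhi⟩ := hmem
  -- basic positivity facts
  have hδ0pos : 0 < δ0 := by rw [hδ0]; linarith
  have hp0 : 0 < p := by
    rw [hp]
    have hc : 0 < (Ω.card : ℝ) := by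
      have := Finset.card_pos.mpr hΩ
      exact_mod_cast this
    have hmn : 0 < (m : ℝ) * (n : ℝ) := by
      have : (0:ℝ) < (m:ℝ) := by exact_mod_cast Nat.lt_of_lt_of_le Nat.zero_lt_one hm
      have : (0:ℝ) < (n:ℝ) := by exact_mod_cast Nat.lt_of_lt_of_le Nat.zero_lt_one hn
      positivity
    positivity
  have hρ0 : 0 < ρ := by rw [hρ]; positivity
  have hs23 : Real.sqrt (2/3) ^ 2 = 2/3 := Real.sq_sqrt (by norm_num)
  have hs23_le : Real.sqrt (2/3) ≤ 1 := Real.sqrt_le_one.mpr (by norm_num : (2:ℝ)/3 ≤ 1)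
  have hs23_nn : 0 ≤ Real.sqrt (2/3) := Real.sqrt_nonneg _
  -- (X0,Y0) ∈ K1 ∩ K2 ∩ K(δ)
  have h0K1' : K1mem β1 β2 X0 Y0 := by
    constructor
    · intro i
      have := h0K1.1 i
      nlinarith [rowNorm_nonneg X0 i]
    · intro j
      have := h0K1.2 j
      nlinarith [rowNorm_nonneg Y0 j]
  have h0K2' : K2mem βT X0 Y0 := by
    constructor
    · have := h0K2.1; nlinarith [frob_nonneg X0]
    · have := h0K2.2; nlinarith [frob_nonneg Y0]
  have h0Kδ : Kmem M δ X0 Y0 := by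
    unfold Kmem at h0K ⊢
    linarith [h0K, hδ0pos]
  -- G(X0,Y0) = 0
  have hG0zero : Greg ρ β1 β2 βT X0 Y0 = 0 := by
    unfold Greg
    have e1 : ∀ i, G0 (3 * rowNorm X0 i ^ 2 / (2 * β1 ^ 2)) = 0 := by
      intro i
      apply G0_eq_zero
      have h := h0K1.1 i
      have hb : rowNorm X0 i ^ 2 ≤ 2/3 * β1 ^ 2 := by
        nlinarith [rowNorm_nonneg X0 i]
      rw [div_le_one (by positivity)]
      nlinarith
    have e2 : ∀ j, G0 (3 * rowNorm Y0 j ^ 2 / (2 * β2 ^ 2)) = 0 := by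
      intro j
      apply G0_eq_zero
      have h := h0K1.2 j
      have hb : rowNorm Y0 j ^ 2 ≤ 2/3 * β2 ^ 2 := by
        nlinarith [rowNorm_nonneg Y0 j]
      rw [div_le_one (by positivity)]
      nlinarith
    have e3 : G0 (3 * frob X0 ^ 2 / (2 * βT ^ 2)) = 0 := by
      apply G0_eq_zero
      have h := h0K2.1
      have hb : frob X0 ^ 2 ≤ 2/3 * βT ^ 2 := by
        nlinarith [frob_nonneg X0]
      rw [div_le_one (by positivity)]
      nlinarith
    have e4 : G0 (3 * frob Y0 ^ 2 / (2 * βT ^ 2)) = 0 := by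
      apply G0_eq_zero
      have h := h0K2.2
      have hb : frob Y0 ^ 2 ≤ 2/3 * βT ^ 2 := by
        nlinarith [frob_nonneg Y0]
      rw [div_le_one (by positivity)]
      nlinarith
    simp [e1, e2, e3, e4]
  -- upper bound on F̃(X0,Y0)
  have hRSC0 := (hRSC X0 Y0 h0K1' h0K2' h0Kδ).2
  have hF0 : Ftilde Ω M ρ β1 β2 βT X0 Y0 ≤ p * δ0 ^ 2 := by
    unfold Ftilde
    rw [hG0zero]
    have hfr : frob (M - X0 * Y0ᵀ) ^ 2 ≤ δ0 ^ 2 := by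
      have := h0K
      unfold Kmem at this
      nlinarith [frob_nonneg (M - X0 * Y0ᵀ)]
    nlinarith
  -- key claim: F̃(X,Y) > 2 p δ0²
  have hproj_nn : 0 ≤ frob (projOmega Ω (M - X * Yᵀ)) ^ 2 := sq_nonneg _
  have key : 2 * p * δ0 ^ 2 < Ftilde Ω M ρ β1 β2 βT X Y := by
    by_cases hK : K1mem β1 β2 X Y ∧ K2mem βT X Y
    · -- apply RSC lower bound
      have hRSCX := (hRSC X Y hK.1 hK.2 hhi).1
      have hfr : 4 * δ ^ 2 / 9 ≤ frob (M - X * Yᵀ) ^ 2 := by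
        nlinarith [frob_nonneg (M - X * Yᵀ), hδ]
      have hGnn := Greg_nonneg ρ β1 β2 βT (le_of_lt hρ0) X Y
      have hmul : p * (4 * δ ^ 2 / 9) ≤ p * frob (M - X * Yᵀ) ^ 2 :=
        mul_le_mul_of_nonneg_left hfr hp0.le
      have hpd : 0 < p * δ ^ 2 := by positivity
      unfold Ftilde
      rw [hδ0]
      linarith
    · -- some constraint violated, so G(X,Y) > ρ/4
      have hGbig : ρ / 4 < Greg ρ β1 β2 βT X Y := by
        have hsum1 : ∀ (i : Fin m), G0 (3 * rowNorm X i ^ 2 / (2 * β1 ^ 2)) ≤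
            ∑ i', G0 (3 * rowNorm X i' ^ 2 / (2 * β1 ^ 2)) := fun i =>
          Finset.single_le_sum (f := fun i' => G0 (3 * rowNorm X i' ^ 2 / (2 * β1 ^ 2)))
            (fun i' _ => G0_nonneg _) (Finset.mem_univ i)
        have hsum2 : ∀ (j : Fin n), G0 (3 * rowNorm Y j ^ 2 / (2 * β2 ^ 2)) ≤
            ∑ j', G0 (3 * rowNorm Y j' ^ 2 / (2 * β2 ^ 2)) := fun j =>
          Finset.single_le_sum (f := fun j' => G0 (3 * rowNorm Y j' ^ 2 / (2 * β2 ^ 2)))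
            (fun j' _ => G0_nonneg _) (Finset.mem_univ j)
        have h1nn : 0 ≤ ∑ i, G0 (3 * rowNorm X i ^ 2 / (2 * β1 ^ 2)) :=
          Finset.sum_nonneg fun i _ => G0_nonneg _
        have h2nn : 0 ≤ ∑ j, G0 (3 * rowNorm Y j ^ 2 / (2 * β2 ^ 2)) :=
          Finset.sum_nonneg fun j _ => G0_nonneg _
        have h3nn := G0_nonneg (3 * frob X ^ 2 / (2 * βT ^ 2))
        have h4nn := G0_nonneg (3 * frob Y ^ 2 / (2 * βT ^ 2))
        have hm1 : 0 ≤ ρ * ∑ i, G0 (3 * rowNorm X i ^ 2 / (2 * β1 ^ 2)) :=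
          mul_nonneg hρ0.le h1nn
        have hm2 : 0 ≤ ρ * ∑ j, G0 (3 * rowNorm Y j ^ 2 / (2 * β2 ^ 2)) :=
          mul_nonneg hρ0.le h2nn
        have hm3 : 0 ≤ ρ * G0 (3 * frob X ^ 2 / (2 * βT ^ 2)) := mul_nonneg hρ0.le h3nn
        have hm4 : 0 ≤ ρ * G0 (3 * frob Y ^ 2 / (2 * βT ^ 2)) := mul_nonneg hρ0.le h4nn
        rw [not_and_or] at hK
        rcases hK with hK | hK
        · unfold K1mem at hK
          rw [not_and_or] at hK
          rcases hK with hK | hK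
          · push_neg at hK
            obtain ⟨i, hi⟩ := hK
            have hz : 3 / 2 < 3 * rowNorm X i ^ 2 / (2 * β1 ^ 2) := by
              rw [lt_div_iff₀ (by positivity)]
              nlinarith
            have hq := mul_lt_mul_of_pos_left (G0_gt_quarter hz) hρ0
            have hle := mul_le_mul_of_nonneg_left (hsum1 i) hρ0.le
            unfold Greg
            linarith
          · push_neg at hK
            obtain ⟨j, hj⟩ := hK
            have hz : 3 / 2 < 3 * rowNorm Y j ^ 2 / (2 * β2 ^ 2) := by
              rw [lt_div_iff₀ (by positivity)]
              nlinarith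
            have hq := mul_lt_mul_of_pos_left (G0_gt_quarter hz) hρ0
            have hle := mul_le_mul_of_nonneg_left (hsum2 j) hρ0.le
            unfold Greg
            linarith
        · unfold K2mem at hK
          rw [not_and_or] at hK
          rcases hK with hK | hK
          · push_neg at hK
            have hz : 3 / 2 < 3 * frob X ^ 2 / (2 * βT ^ 2) := by
              rw [lt_div_iff₀ (by positivity)]
              nlinarith
            have hq := mul_lt_mul_of_pos_left (G0_gt_quarter hz) hρ0
            unfold Greg
            linarith
          · push_neg at hK
            have hz : 3 / 2 < 3 * frob Y ^ 2 / (2 * βT ^ 2) := by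
              rw [lt_div_iff₀ (by positivity)]
              nlinarith
            have hq := mul_lt_mul_of_pos_left (G0_gt_quarter hz) hρ0
            unfold Greg
            linarith
      have hρ4 : ρ / 4 = 2 * p * δ0 ^ 2 := by rw [hρ]; ring
      unfold Ftilde
      linarith
  linarith


end
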